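/- Let G = (V,A) be a finite directed graph with A nonempty, c : A → ℝ a strictly positive weight function, c̃ = 1/c, and b : 2^V → ℝ submodular; assume at least one submodular flow exists and that there exists a set X ⊆ V with ∂_c̃(X) > 0. Then the optimal weighted spread satisfies σ* = max( 0 , max{ (−b(X)∂_c̃(Y) + b(Y)∂_c̃(X)) / (δ_c̃(X)∂_c̃(Y) − δ_c̃(Y)∂_c̃(X)) : X, Y ⊆ V, ∂_c̃(X) ≥ 0, ∂_c̃(Y) < 0, ϱ_c̃(X) + δ_c̃(X) > 0 } ). -/
import Mathlib


open Finset

def inEdges {V A : Type*} [Fintype A] [DecidableEq V] (t hd : A → V) (X : Finset V) : Finset A :=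
  univ.filter fun e => t e ∉ X ∧ hd e ∈ X

def outEdges {V A : Type*} [Fintype A] [DecidableEq V] (t hd : A → V) (X : Finset V) : Finset A :=
  univ.filter fun e => t e ∈ X ∧ hd e ∉ X

def rhoF {V A : Type*} [Fintype A] [DecidableEq V] (t hd : A → V) (x : A → ℝ) (X : Finset V) : ℝ :=
  ∑ e ∈ inEdges t hd X, x e

def deltaF {V A : Type*} [Fintype A] [DecidableEq V] (t hd : A → V) (x : A → ℝ) (X : Finset V) : ℝ :=
  ∑ e ∈ outEdges t hd X, x e

def rhoC {V A : Type*} [Fintype A] [DecidableEq V] (t hd : A → V) (X : Finset V) : ℕ :=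
  (inEdges t hd X).card

def deltaC {V A : Type*} [Fintype A] [DecidableEq V] (t hd : A → V) (X : Finset V) : ℕ :=
  (outEdges t hd X).card

def partC {V A : Type*} [Fintype A] [DecidableEq V] (t hd : A → V) (X : Finset V) : ℝ :=
  (rhoC t hd X : ℝ) - (deltaC t hd X : ℝ)

def Submodular {V : Type*} [DecidableEq V] (b : Finset V → ℝ) : Prop :=
  ∀ X Y : Finset V, b (X ∪ Y) + b (X ∩ Y) ≤ b X + b Y

def IsSubmodularFlow {V A : Type*} [Fintype A] [DecidableEq V] (t hd : A → V)
    (b : Finset V → ℝ) (x : A → ℝ) : Prop :=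
  ∀ X : Finset V, rhoF t hd x X - deltaF t hd x X ≤ b X

noncomputable def spread {A : Type*} [Fintype A] [Nonempty A] (x : A → ℝ) : ℝ :=
  univ.sup' univ_nonempty x - univ.inf' univ_nonempty x

noncomputable def sigmaStar {V A : Type*} [Fintype A] [DecidableEq V] [Nonempty A]
    (t hd : A → V) (b : Finset V → ℝ) : ℝ :=
  sInf {s : ℝ | ∃ x : A → ℝ, IsSubmodularFlow t hd b x ∧ spread x = s}

noncomputable def rhoW {V A : Type*} [Fintype A] [DecidableEq V] (t hd : A → V)
    (c : A → ℝ) (X : Finset V) : ℝ :=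
  ∑ e ∈ inEdges t hd X, (c e)⁻¹

noncomputable def deltaW {V A : Type*} [Fintype A] [DecidableEq V] (t hd : A → V)
    (c : A → ℝ) (X : Finset V) : ℝ :=
  ∑ e ∈ outEdges t hd X, (c e)⁻¹

noncomputable def partW {V A : Type*} [Fintype A] [DecidableEq V] (t hd : A → V)
    (c : A → ℝ) (X : Finset V) : ℝ :=
  rhoW t hd c X - deltaW t hd c X

noncomputable def spreadW {A : Type*} [Fintype A] [Nonempty A] (c x : A → ℝ) : ℝ :=
  univ.sup' univ_nonempty (fun e => c e * x e) - univ.inf' univ_nonempty (fun e => c e * x e)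

noncomputable def sigmaStarW {V A : Type*} [Fintype A] [DecidableEq V] [Nonempty A]
    (t hd : A → V) (c : A → ℝ) (b : Finset V → ℝ) : ℝ :=
  sInf {s : ℝ | ∃ x : A → ℝ, IsSubmodularFlow t hd b x ∧ spreadW c x = s}

noncomputable def sW {V A : Type*} [Fintype A] [DecidableEq V] (t hd : A → V)
    (c : A → ℝ) (b : Finset V → ℝ) (κ : ℝ) : ℝ :=
  sInf {σ : ℝ | 0 ≤ σ ∧ ∃ x : A → ℝ, IsSubmodularFlow t hd b x ∧
    ∀ e : A, κ * (c e)⁻¹ ≤ x e ∧ x e ≤ (κ + σ) * (c e)⁻¹}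

section
variable {V A : Type*} [Fintype A] [DecidableEq V] [DecidableEq A] (t hd : A → V)

/-- per-edge contribution -/
noncomputable def phi (f g : A → ℝ) (X : Finset V) (e : A) : ℝ :=
  (if t e ∉ X ∧ hd e ∈ X then f e else 0) - (if t e ∈ X ∧ hd e ∉ X then g e else 0)

lemma hfun_eq (f g : A → ℝ) (X : Finset V) :
    rhoF t hd f X - deltaF t hd g X = ∑ e, phi t hd f g X e := by
  unfold rhoF deltaF inEdges outEdges phi
  rw [sum_filter, sum_filter, ← sum_sub_distrib]

lemma phi_cross_ineq (f g : A → ℝ) (hfg : ∀ e, f e ≤ g e) (X Y : Finset V) (e0 : A)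
    (h1 : t e0 ∈ X) (h2 : t e0 ∉ Y) (h3 : hd e0 ∈ Y) (h4 : hd e0 ∉ X) (e : A) :
    phi t hd f g X e + phi t hd f g Y e + (if e = e0 then g e - f e else 0) ≤
      phi t hd f g (X ∪ Y) e + phi t hd f g (X ∩ Y) e := by
  have hab := hfg e
  unfold phi
  simp only [mem_union, mem_inter]
  by_cases he : e = e0
  · subst he
    simp [h1, h2, h3, h4]
  · simp only [he, if_false]
    by_cases p : t e ∈ X <;> by_cases q : t e ∈ Y <;> by_cases u : hd e ∈ X <;>
      by_cases v : hd e ∈ Y <;> simp [p, q, u, v] <;> linarith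

lemma cross_ineq (f g : A → ℝ) (hfg : ∀ e, f e ≤ g e) (X Y : Finset V) (e0 : A)
    (h1 : t e0 ∈ X) (h2 : t e0 ∉ Y) (h3 : hd e0 ∈ Y) (h4 : hd e0 ∉ X) :
    (rhoF t hd f X - deltaF t hd g X) + (rhoF t hd f Y - deltaF t hd g Y) + (g e0 - f e0) ≤
      (rhoF t hd f (X ∪ Y) - deltaF t hd g (X ∪ Y)) +
        (rhoF t hd f (X ∩ Y) - deltaF t hd g (X ∩ Y)) := by
  have key : ∑ e, (phi t hd f g X e + phi t hd f g Y e + (if e = e0 then g e - f e else 0)) ≤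
      ∑ e, (phi t hd f g (X ∪ Y) e + phi t hd f g (X ∩ Y) e) :=
    sum_le_sum fun e _ => phi_cross_ineq t hd f g hfg X Y e0 h1 h2 h3 h4 e
  simp only [sum_add_distrib] at key
  rw [sum_ite_eq' univ e0 (fun e => g e - f e)] at key
  simp only [mem_univ, if_true] at key
  rw [hfun_eq, hfun_eq, hfun_eq, hfun_eq]
  linarith

end

section
variable {V A : Type*} [Fintype A] [DecidableEq V] [DecidableEq A] (t hd : A → V)

lemma sum_update' (s : Finset A) (f : A → ℝ) (e0 : A) (v : ℝ) :
    ∑ e ∈ s, Function.update f e0 v e = (∑ e ∈ s, f e) + (if e0 ∈ s then v - f e0 else 0) := by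
  by_cases h : e0 ∈ s
  · rw [Finset.sum_update_of_mem h, if_pos h, ← Finset.sum_erase_add s f h,
      Finset.sdiff_singleton_eq_erase]
    ring
  · rw [if_neg h, add_zero]
    exact Finset.sum_congr rfl fun e he => Function.update_of_ne (fun hh => h (by rw [← hh]; exact he)) v f

lemma rhoF_update (f : A → ℝ) (e0 : A) (v : ℝ) (X : Finset V) :
    rhoF t hd (Function.update f e0 v) X =
      rhoF t hd f X + (if t e0 ∉ X ∧ hd e0 ∈ X then v - f e0 else 0) := by
  unfold rhoF
  rw [sum_update']
  congr 1
  simp [inEdges]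

lemma deltaF_update (f : A → ℝ) (e0 : A) (v : ℝ) (X : Finset V) :
    deltaF t hd (Function.update f e0 v) X =
      deltaF t hd f X + (if t e0 ∈ X ∧ hd e0 ∉ X then v - f e0 else 0) := by
  unfold deltaF
  rw [sum_update']
  congr 1
  simp [outEdges]

lemma step_lemma [Fintype V] (b : Finset V → ℝ) (hb : Submodular b) (f g : A → ℝ)
    (hfg : ∀ e, f e ≤ g e) (hC : ∀ X : Finset V, rhoF t hd f X - deltaF t hd g X ≤ b X)
    (e0 : A) :
    ∃ v : ℝ, f e0 ≤ v ∧ v ≤ g e0 ∧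
      (∀ X : Finset V, rhoF t hd (Function.update f e0 v) X -
        deltaF t hd (Function.update g e0 v) X ≤ b X) := by
  set F : Finset (Finset V) := univ.powerset.filter (fun X => t e0 ∈ X ∧ hd e0 ∉ X) with hFdef
  have hmemF : ∀ X : Finset V, X ∈ F ↔ (t e0 ∈ X ∧ hd e0 ∉ X) := by
    intro X; simp [hFdef]
  -- the candidate value
  obtain ⟨v, hA, hB, hCC, hD⟩ :
      ∃ v : ℝ, f e0 ≤ v ∧ v ≤ g e0 ∧
        (∀ X : Finset V, t e0 ∈ X → hd e0 ∉ X →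
          g e0 + (rhoF t hd f X - deltaF t hd g X) - b X ≤ v) ∧
        (∀ Y : Finset V, t e0 ∉ Y → hd e0 ∈ Y →
          v ≤ f e0 + b Y - (rhoF t hd f Y - deltaF t hd g Y)) := by
    by_cases hF : F.Nonempty
    · refine ⟨max (f e0) (F.sup' hF fun X => g e0 + (rhoF t hd f X - deltaF t hd g X) - b X),
        le_max_left _ _, ?_, ?_, ?_⟩
      · refine max_le (hfg e0) (Finset.sup'_le _ _ fun X hX => ?_)
        have := hC X
        linarith
      · intro X h1 h2
        refine le_trans ?_ (le_max_right _ _)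
        exact Finset.le_sup' (fun X => g e0 + (rhoF t hd f X - deltaF t hd g X) - b X) ((hmemF X).2 ⟨h1, h2⟩)
      · intro Y h1 h2
        refine max_le ?_ (Finset.sup'_le _ _ fun X hX => ?_)
        · have := hC Y; linarith
        · obtain ⟨hx1, hx2⟩ := (hmemF X).1 hX
          have hcross := cross_ineq t hd f g hfg X Y e0 hx1 h1 h2 hx2
          have h3 := hC (X ∪ Y)
          have h4 := hC (X ∩ Y)
          have h5 := hb X Y
          linarith
    · refine ⟨f e0, le_rfl, hfg e0, ?_, ?_⟩
      · intro X h1 h2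
        exact absurd ⟨X, (hmemF X).2 ⟨h1, h2⟩⟩ hF
      · intro Y h1 h2
        have := hC Y; linarith
  refine ⟨v, hA, hB, fun X => ?_⟩
  rw [rhoF_update, deltaF_update]
  by_cases p : t e0 ∈ X <;> by_cases q : hd e0 ∈ X
  · simp only [p, q, not_true]
    simp only [false_and, and_false, if_false]
    have := hC X; linarith
  · simp only [p, q, not_true, not_false_iff]
    simp only [false_and, and_true, true_and, if_false, if_true]
    have := hCC X p q
    have := hC X
    linarith
  · simp only [p, q, not_false_iff, not_true]
    simp only [true_and, and_false, if_true, if_false]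
    have := hD X p q
    linarith
  · simp only [p, q, not_false_iff]
    simp only [false_and, and_false, if_false]
    have := hC X; linarith

end

section
variable {V A : Type*} [Fintype A] [DecidableEq V] [DecidableEq A] [Fintype V] (t hd : A → V)

lemma iterate_lemma (b : Finset V → ℝ) (hb : Submodular b) :
    ∀ (l : List A) (f g : A → ℝ), (∀ e, f e ≤ g e) →
      (∀ X : Finset V, rhoF t hd f X - deltaF t hd g X ≤ b X) →
      ∃ f' g' : A → ℝ, (∀ e, f e ≤ f' e) ∧ (∀ e, g' e ≤ g e) ∧ (∀ e, f' e ≤ g' e) ∧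
        (∀ X : Finset V, rhoF t hd f' X - deltaF t hd g' X ≤ b X) ∧
        (∀ e ∈ l, f' e = g' e) := by
  intro l
  induction l with
  | nil => exact fun f g hfg hC => ⟨f, g, fun _ => le_rfl, fun _ => le_rfl, hfg, hC, by simp⟩
  | cons e0 l ih =>
    intro f g hfg hC
    obtain ⟨v, hv1, hv2, hC'⟩ := step_lemma t hd b hb f g hfg hC e0
    set f1 := Function.update f e0 v with hf1
    set g1 := Function.update g e0 v with hg1
    have hfg1 : ∀ e, f1 e ≤ g1 e := by
      intro e
      by_cases he : e = e0
      · subst he; simp [hf1, hg1]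
      · simp [hf1, hg1, Function.update_of_ne he]
        exact hfg e
    obtain ⟨f', g', h1, h2, h3, h4, h5⟩ := ih f1 g1 hfg1 hC'
    refine ⟨f', g', ?_, ?_, h3, h4, ?_⟩
    · intro e
      refine le_trans ?_ (h1 e)
      by_cases he : e = e0
      · subst he; simp [hf1, hv1]
      · simp [hf1, Function.update_of_ne he]
    · intro e
      refine le_trans (h2 e) ?_
      by_cases he : e = e0
      · subst he; simp [hg1, hv2]
      · simp [hg1, Function.update_of_ne he]
    · intro e he
      rcases List.mem_cons.1 he with he | he
      · subst he
        have e1 : f1 e = v := by simp [hf1]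
        have e2 : g1 e = v := by simp [hg1]
        have l1 := h1 e
        have l2 := h2 e
        rw [e1] at l1
        rw [e2] at l2
        have := h3 e
        linarith
      · exact h5 e he

theorem feasibility (b : Finset V → ℝ) (hb : Submodular b) (f g : A → ℝ)
    (hfg : ∀ e, f e ≤ g e)
    (hC : ∀ X : Finset V, rhoF t hd f X - deltaF t hd g X ≤ b X) :
    ∃ x : A → ℝ, (∀ e, f e ≤ x e) ∧ (∀ e, x e ≤ g e) ∧
      (∀ X : Finset V, rhoF t hd x X - deltaF t hd x X ≤ b X) := by
  obtain ⟨f', g', h1, h2, h3, h4, h5⟩ :=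
    iterate_lemma t hd b hb (Finset.univ.toList) f g hfg hC
  have hfg' : f' = g' := funext fun e => h5 e (by simp)
  exact ⟨f', h1, fun e => hfg' ▸ h2 e, fun X => by rw [hfg']; exact hfg' ▸ h4 X⟩

end

section main
variable {V A : Type*} [Fintype V] [Fintype A] [DecidableEq V] [Nonempty A]
  (t hd : A → V) (c : A → ℝ)

lemma rhoW_nonneg (hc : ∀ e, 0 < c e) (X : Finset V) : 0 ≤ rhoW t hd c X :=
  Finset.sum_nonneg fun e _ => inv_nonneg.2 (hc e).le

lemma deltaW_nonneg (hc : ∀ e, 0 < c e) (X : Finset V) : 0 ≤ deltaW t hd c X :=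
  Finset.sum_nonneg fun e _ => inv_nonneg.2 (hc e).le

lemma inEdges_compl (X : Finset V) : inEdges t hd Xᶜ = outEdges t hd X := by
  ext e; simp [inEdges, outEdges]

lemma outEdges_compl (X : Finset V) : outEdges t hd Xᶜ = inEdges t hd X := by
  ext e; simp [inEdges, outEdges]

lemma partW_compl (X : Finset V) : partW t hd c Xᶜ = - partW t hd c X := by
  unfold partW rhoW deltaW
  rw [inEdges_compl, outEdges_compl]
  ring

lemma spreadW_nonneg (x : A → ℝ) : 0 ≤ spreadW c x := by
  unfold spreadW
  have a : A := Classical.arbitrary A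
  have h1 := Finset.le_sup' (fun e => c e * x e) (Finset.mem_univ a)
  have h2 := Finset.inf'_le (fun e => c e * x e) (Finset.mem_univ a)
  linarith

lemma flow_bound (hc : ∀ e, 0 < c e) (b : Finset V → ℝ) (x : A → ℝ)
    (hx : IsSubmodularFlow t hd b x) (Z : Finset V) :
    (univ.inf' univ_nonempty fun e => c e * x e) * partW t hd c Z -
      spreadW c x * deltaW t hd c Z ≤ b Z := by
  set κ := univ.inf' univ_nonempty fun e => c e * x e with hκ
  set s := spreadW c x with hs
  have hlow : ∀ e, κ * (c e)⁻¹ ≤ x e := by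
    intro e
    rw [← div_eq_mul_inv, div_le_iff₀ (hc e)]
    have := Finset.inf'_le (fun e => c e * x e) (Finset.mem_univ e)
    rw [← hκ] at this
    linarith [mul_comm (c e) (x e)]
  have hup : ∀ e, x e ≤ (κ + s) * (c e)⁻¹ := by
    intro e
    rw [← div_eq_mul_inv, le_div_iff₀ (hc e)]
    have := Finset.le_sup' (fun e => c e * x e) (Finset.mem_univ e)
    have hss : κ + s = univ.sup' univ_nonempty fun e => c e * x e := by
      rw [hs]; unfold spreadW; rw [← hκ]; ring
    rw [hss]
    linarith [mul_comm (c e) (x e)]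
  have h1 : κ * rhoW t hd c Z ≤ rhoF t hd x Z := by
    unfold rhoW rhoF
    rw [Finset.mul_sum]
    exact Finset.sum_le_sum fun e _ => hlow e
  have h2 : deltaF t hd x Z ≤ (κ + s) * deltaW t hd c Z := by
    unfold deltaW deltaF
    rw [Finset.mul_sum]
    exact Finset.sum_le_sum fun e _ => hup e
  have h3 := hx Z
  have h4 : κ * partW t hd c Z - s * deltaW t hd c Z =
      κ * rhoW t hd c Z - (κ + s) * deltaW t hd c Z := by
    unfold partW; ring
  linarith

lemma r_le_spread (hc : ∀ e, 0 < c e) (b : Finset V → ℝ) (x : A → ℝ)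
    (hx : IsSubmodularFlow t hd b x) (X Y : Finset V)
    (hX : 0 ≤ partW t hd c X) (hY : partW t hd c Y < 0) :
    (-(b X) * partW t hd c Y + b Y * partW t hd c X) /
      (deltaW t hd c X * partW t hd c Y - deltaW t hd c Y * partW t hd c X) ≤
      spreadW c x := by
  set κ := univ.inf' univ_nonempty fun e => c e * x e with hκ
  set s := spreadW c x with hs
  have s0 : 0 ≤ s := spreadW_nonneg c x
  have b1 := flow_bound t hd c hc b x hx X
  have b2 := flow_bound t hd c hc b x hx Y
  rw [← hκ, ← hs] at b1 b2
  have hdX := deltaW_nonneg t hd c hc X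
  have hdY := deltaW_nonneg t hd c hc Y
  set D := deltaW t hd c X * partW t hd c Y - deltaW t hd c Y * partW t hd c X with hD
  have hDle : D ≤ 0 := by
    rw [hD]
    nlinarith
  have hN : s * D ≤ -(b X) * partW t hd c Y + b Y * partW t hd c X := by
    have m1 : (κ * partW t hd c X - s * deltaW t hd c X - b X) * (- partW t hd c Y) ≤ 0 :=
      mul_nonpos_of_nonpos_of_nonneg (by linarith) (by linarith)
    have m2 : (κ * partW t hd c Y - s * deltaW t hd c Y - b Y) * partW t hd c X ≤ 0 :=
      mul_nonpos_of_nonpos_of_nonneg (by linarith) hX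
    rw [hD]
    nlinarith [m1, m2]
  rcases lt_or_eq_of_le hDle with hlt | heq
  · rw [div_le_iff_of_neg hlt]
    linarith [hN]
  · rw [heq, div_zero]
    exact s0

end main

section main2
variable {V A : Type*} [Fintype V] [Fintype A] [DecidableEq V] [Nonempty A]
  (t hd : A → V) (c : A → ℝ)

lemma kappa_exists (hc : ∀ e, 0 < c e) (b : Finset V → ℝ)
    (hfeas : ∃ x : A → ℝ, IsSubmodularFlow t hd b x)
    (hex : ∃ X : Finset V, 0 < partW t hd c X)
    (σ : ℝ) (hσ0 : 0 ≤ σ)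
    (hσS : ∀ X Y : Finset V, 0 ≤ partW t hd c X → partW t hd c Y < 0 →
      0 < rhoW t hd c X + deltaW t hd c X →
      (-(b X) * partW t hd c Y + b Y * partW t hd c X) /
        (deltaW t hd c X * partW t hd c Y - deltaW t hd c Y * partW t hd c X) ≤ σ) :
    ∃ κ : ℝ, ∀ Z : Finset V, κ * partW t hd c Z - σ * deltaW t hd c Z ≤ b Z := by
  obtain ⟨x0, hx0⟩ := hfeas
  obtain ⟨X0, hX0⟩ := hex
  set κ0 := univ.inf' univ_nonempty fun e => c e * x0 e with hκ0
  have hbnd : ∀ Z : Finset V, κ0 * partW t hd c Z - spreadW c x0 * deltaW t hd c Z ≤ b Z :=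
    flow_bound t hd c hc b x0 hx0
  set F : Finset (Finset V) := univ.powerset.filter (fun Z => 0 < partW t hd c Z) with hFdef
  have hmemF : ∀ Z : Finset V, Z ∈ F ↔ 0 < partW t hd c Z := by
    intro Z; simp [hFdef]
  have hFne : F.Nonempty := ⟨X0, (hmemF X0).2 hX0⟩
  set κ := F.inf' hFne (fun Z => (b Z + σ * deltaW t hd c Z) / partW t hd c Z) with hκ
  refine ⟨κ, fun Z => ?_⟩
  have hδZ := deltaW_nonneg t hd c hc Z
  rcases lt_trichotomy (partW t hd c Z) 0 with hneg | hzero | hpos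
  · -- ∂Z < 0
    obtain ⟨X, hXF, hXeq⟩ :=
      Finset.exists_mem_eq_inf' hFne (fun Z => (b Z + σ * deltaW t hd c Z) / partW t hd c Z)
    have hXpos : 0 < partW t hd c X := (hmemF X).1 hXF
    have hδX := deltaW_nonneg t hd c hc X
    have hk : κ * partW t hd c X = b X + σ * deltaW t hd c X := by
      rw [hκ, hXeq, div_mul_cancel₀ _ hXpos.ne']
    have hDle : deltaW t hd c X * partW t hd c Z - deltaW t hd c Z * partW t hd c X ≤ 0 := by
      nlinarith
    rcases lt_or_eq_of_le hDle with hDlt | hDeq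
    · have hρδ : 0 < rhoW t hd c X + deltaW t hd c X := by
        have : partW t hd c X = rhoW t hd c X - deltaW t hd c X := rfl
        linarith
      have hr := hσS X Z hXpos.le hneg hρδ
      rw [div_le_iff_of_neg hDlt] at hr
      -- hr : σ * D ≤ N
      have key : (b X + σ * deltaW t hd c X) * partW t hd c Z ≤
          (b Z + σ * deltaW t hd c Z) * partW t hd c X := by nlinarith [hr]
      have : κ * partW t hd c Z * partW t hd c X ≤
          (b Z + σ * deltaW t hd c Z) * partW t hd c X := by nlinarith [hk, key]
      have h2 := le_of_mul_le_mul_right this hXpos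
      linarith
    · -- degenerate: δX = 0 and δZ = 0
      have e1 : deltaW t hd c X * partW t hd c Z ≤ 0 :=
        mul_nonpos_of_nonneg_of_nonpos hδX hneg.le
      have e2 : 0 ≤ deltaW t hd c Z * partW t hd c X := mul_nonneg hδZ hXpos.le
      have hXzero : deltaW t hd c X = 0 := by
        have h3 : deltaW t hd c X * partW t hd c Z = 0 := by linarith
        rcases mul_eq_zero.1 h3 with h | h
        · exact h
        · exact absurd h hneg.ne
      have hZzero : deltaW t hd c Z = 0 := by
        have h3 : deltaW t hd c Z * partW t hd c X = 0 := by linarith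
        rcases mul_eq_zero.1 h3 with h | h
        · exact h
        · exact absurd h hXpos.ne'
      have hκ0X : κ0 * partW t hd c X ≤ b X := by
        have := hbnd X; rw [hXzero] at this; linarith
      have hκ0Z : κ0 * partW t hd c Z ≤ b Z := by
        have := hbnd Z; rw [hZzero] at this; linarith
      have hκge : κ0 ≤ κ := by
        rw [hκ, hXeq, hXzero, mul_zero, add_zero, le_div_iff₀ hXpos]
        linarith
      have : κ * partW t hd c Z ≤ κ0 * partW t hd c Z :=
        mul_le_mul_of_nonpos_right hκge hneg.le
      rw [hZzero]
      linarith
  · -- ∂Z = 0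
    rw [hzero, mul_zero, zero_sub, neg_le]
    rcases eq_or_lt_of_le hδZ with hz | hz
    · have := hbnd Z
      rw [hzero, ← hz] at this
      rw [← hz]
      linarith
    · -- δZ > 0, use Y = X0ᶜ
      have hYneg : partW t hd c X0ᶜ < 0 := by
        rw [partW_compl]; linarith
      have hρδ : 0 < rhoW t hd c Z + deltaW t hd c Z := by
        have hzz : rhoW t hd c Z - deltaW t hd c Z = 0 := hzero
        linarith
      have hr := hσS Z X0ᶜ hzero.ge hYneg hρδ
      rw [hzero, mul_zero, add_zero, mul_zero, sub_zero] at hr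
      have hden : deltaW t hd c Z * partW t hd c X0ᶜ < 0 :=
        mul_neg_of_pos_of_neg hz hYneg
      rw [div_le_iff_of_neg hden] at hr
      nlinarith [hr, hYneg]
  · -- ∂Z > 0
    have hκle : κ ≤ (b Z + σ * deltaW t hd c Z) / partW t hd c Z := by
      rw [hκ]
      exact Finset.inf'_le _ ((hmemF Z).2 hpos)
    rw [le_div_iff₀ hpos] at hκle
    linarith

end main2

theorem stmt_8 {V A : Type*} [Fintype V] [Fintype A] [DecidableEq V] [Nonempty A]
    (t hd : A → V) (c : A → ℝ) (hc : ∀ e : A, 0 < c e)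
    (b : Finset V → ℝ) (hb : Submodular b)
    (hfeas : ∃ x : A → ℝ, IsSubmodularFlow t hd b x)
    (hex : ∃ X : Finset V, 0 < partW t hd c X) :
    sigmaStarW t hd c b =
      max 0 (sSup {r : ℝ | ∃ X Y : Finset V,
        0 ≤ partW t hd c X ∧ partW t hd c Y < 0 ∧
        0 < rhoW t hd c X + deltaW t hd c X ∧
        r = (-(b X) * partW t hd c Y + b Y * partW t hd c X) /
          (deltaW t hd c X * partW t hd c Y - deltaW t hd c Y * partW t hd c X)}) := by
  classical
  obtain ⟨x0, hx0⟩ := hfeas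
  obtain ⟨X0, hX0⟩ := hex
  set S : Set ℝ := {r : ℝ | ∃ X Y : Finset V,
        0 ≤ partW t hd c X ∧ partW t hd c Y < 0 ∧
        0 < rhoW t hd c X + deltaW t hd c X ∧
        r = (-(b X) * partW t hd c Y + b Y * partW t hd c X) /
          (deltaW t hd c X * partW t hd c Y - deltaW t hd c Y * partW t hd c X)} with hSdef
  set T : Set ℝ := {s : ℝ | ∃ x : A → ℝ, IsSubmodularFlow t hd b x ∧ spreadW c x = s} with hTdef
  have hTne : T.Nonempty := ⟨spreadW c x0, x0, hx0, rfl⟩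
  have hTbdd : BddBelow T := ⟨0, fun s ⟨x, _, hsx⟩ => hsx ▸ spreadW_nonneg c x⟩
  -- every element of S is ≤ spread of any flow
  have hSb : ∀ (x : A → ℝ), IsSubmodularFlow t hd b x → ∀ r ∈ S, r ≤ spreadW c x := by
    rintro x hx r ⟨X, Y, h1, h2, _h3, rfl⟩
    exact r_le_spread t hd c hc b x hx X Y h1 h2
  have hYneg : partW t hd c X0ᶜ < 0 := by rw [partW_compl]; linarith
  have hSne : S.Nonempty := by
    refine ⟨_, X0, X0ᶜ, hX0.le, hYneg, ?_, rfl⟩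
    have hδ := deltaW_nonneg t hd c hc X0
    have : partW t hd c X0 = rhoW t hd c X0 - deltaW t hd c X0 := rfl
    linarith
  have hSbdd : BddAbove S := ⟨spreadW c x0, fun r hr => hSb x0 hx0 r hr⟩
  set M := sSup S with hM
  set σ := max 0 M with hσ
  -- lower bound : σ ≤ sigmaStarW
  have lower : σ ≤ sigmaStarW t hd c b := by
    apply le_csInf hTne
    rintro s ⟨x, hx, rfl⟩
    refine max_le (spreadW_nonneg c x) (csSup_le hSne fun r hr => hSb x hx r hr)
  -- upper bound
  have hσS : ∀ X Y : Finset V, 0 ≤ partW t hd c X → partW t hd c Y < 0 →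
      0 < rhoW t hd c X + deltaW t hd c X →
      (-(b X) * partW t hd c Y + b Y * partW t hd c X) /
        (deltaW t hd c X * partW t hd c Y - deltaW t hd c Y * partW t hd c X) ≤ σ := by
    intro X Y h1 h2 h3
    refine le_trans (le_csSup hSbdd ⟨X, Y, h1, h2, h3, rfl⟩) (le_max_right _ _)
  obtain ⟨κ, hκ⟩ := kappa_exists t hd c hc b ⟨x0, hx0⟩ ⟨X0, hX0⟩ σ (le_max_left _ _) hσS
  have hσ0 : 0 ≤ σ := le_max_left _ _
  -- feasibility with bounds κ/c ≤ x ≤ (κ+σ)/c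
  obtain ⟨x, hx1, hx2, hx3⟩ := feasibility t hd b hb
      (fun e => κ * (c e)⁻¹) (fun e => (κ + σ) * (c e)⁻¹)
      (fun e => mul_le_mul_of_nonneg_right (by linarith) (inv_nonneg.2 (hc e).le))
      (by
        intro Z
        have h1 : rhoF t hd (fun e => κ * (c e)⁻¹) Z = κ * rhoW t hd c Z := by
          unfold rhoF rhoW; rw [Finset.mul_sum]
        have h2 : deltaF t hd (fun e => (κ + σ) * (c e)⁻¹) Z = (κ + σ) * deltaW t hd c Z := by
          unfold deltaF deltaW; rw [Finset.mul_sum]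
        rw [h1, h2]
        have h3 := hκ Z
        have h4 : partW t hd c Z = rhoW t hd c Z - deltaW t hd c Z := rfl
        have h5 : κ * rhoW t hd c Z - (κ + σ) * deltaW t hd c Z =
            κ * partW t hd c Z - σ * deltaW t hd c Z := by rw [h4]; ring
        linarith)
  have hxflow : IsSubmodularFlow t hd b x := hx3
  have hsp : spreadW c x ≤ σ := by
    unfold spreadW
    have hub : ∀ e, c e * x e ≤ κ + σ := by
      intro e
      have := hx2 e
      rw [← div_eq_mul_inv, le_div_iff₀ (hc e)] at this
      linarith [mul_comm (c e) (x e)]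
    have hlb : ∀ e, κ ≤ c e * x e := by
      intro e
      have := hx1 e
      rw [← div_eq_mul_inv, div_le_iff₀ (hc e)] at this
      linarith [mul_comm (c e) (x e)]
    have h5 : univ.sup' univ_nonempty (fun e => c e * x e) ≤ κ + σ :=
      Finset.sup'_le _ _ fun e _ => hub e
    have h6 : κ ≤ univ.inf' univ_nonempty (fun e => c e * x e) :=
      Finset.le_inf' _ _ fun e _ => hlb e
    linarith
  have upper : sigmaStarW t hd c b ≤ σ := by
    refine le_trans (csInf_le hTbdd ⟨x, hxflow, rfl⟩) hsp
  exact le_antisymm upper lower
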